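/- Let u be a classical solution of the forward problem, and write ‖F‖² := ∫₀^T ∫₀^ℓ F(x,t)² dx dt and C_e² := exp(T/ρ₀). Then the boundary slope-velocity trace estimates hold: ∫₀^T (∂ₜ∂ₓu(0,t))² dt ≤ (5ℓ/(6κ₀)) C_e² ‖F‖² and ∫₀^T (∂ₜ∂ₓu(ℓ,t))² dt ≤ (5ℓ/(6κ₀)) C_e² ‖F‖². -/

import Mathlib

open Set

/-- A classical solution of the forward problem for the damped Euler–Bernoulli beam
equation `ρ_A(x) uₜₜ + μ(x) uₜ − (T_r(x) uₓ)ₓ + (r(x) uₓₓ + κ(x) uₓₓₜ)ₓₓ = F(x,t)` on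
`(0,ℓ) × (0,T)`, with homogeneous initial conditions and simply supported boundary
conditions.  The fields `ux, uxx, ut, utt, uxt, uxxt` are the partial derivatives of
`u`, `Ax` is the spatial derivative of `T_r(x) uₓ`, and `Bx, Bxx` are the first and
second spatial derivatives of the bending moment `B(x,t) = r(x) uₓₓ + κ(x) uₓₓₜ`. -/
structure ForwardSol (ℓ T : ℝ) (ρA μ Tr r κ : ℝ → ℝ) (F : ℝ → ℝ → ℝ) where
  u : ℝ → ℝ → ℝ
  ux : ℝ → ℝ → ℝ
  uxx : ℝ → ℝ → ℝ
  ut : ℝ → ℝ → ℝ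
  utt : ℝ → ℝ → ℝ
  uxt : ℝ → ℝ → ℝ
  uxxt : ℝ → ℝ → ℝ
  Ax : ℝ → ℝ → ℝ
  Bx : ℝ → ℝ → ℝ
  Bxx : ℝ → ℝ → ℝ
  smooth : ContDiffOn ℝ (⊤ : ℕ∞) (fun p : ℝ × ℝ => u p.1 p.2) (Icc 0 ℓ ×ˢ Icc 0 T)
  hux : ∀ x ∈ Icc (0:ℝ) ℓ, ∀ t ∈ Icc (0:ℝ) T, HasDerivAt (fun y => u y t) (ux x t) x
  huxx : ∀ x ∈ Icc (0:ℝ) ℓ, ∀ t ∈ Icc (0:ℝ) T, HasDerivAt (fun y => ux y t) (uxx x t) x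
  hut : ∀ x ∈ Icc (0:ℝ) ℓ, ∀ t ∈ Icc (0:ℝ) T, HasDerivAt (fun s => u x s) (ut x t) t
  hutt : ∀ x ∈ Icc (0:ℝ) ℓ, ∀ t ∈ Icc (0:ℝ) T, HasDerivAt (fun s => ut x s) (utt x t) t
  huxt : ∀ x ∈ Icc (0:ℝ) ℓ, ∀ t ∈ Icc (0:ℝ) T, HasDerivAt (fun s => ux x s) (uxt x t) t
  huxxt : ∀ x ∈ Icc (0:ℝ) ℓ, ∀ t ∈ Icc (0:ℝ) T, HasDerivAt (fun s => uxx x s) (uxxt x t) t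
  hAx : ∀ x ∈ Icc (0:ℝ) ℓ, ∀ t ∈ Icc (0:ℝ) T,
    HasDerivAt (fun y => Tr y * ux y t) (Ax x t) x
  hBx : ∀ x ∈ Icc (0:ℝ) ℓ, ∀ t ∈ Icc (0:ℝ) T,
    HasDerivAt (fun y => r y * uxx y t + κ y * uxxt y t) (Bx x t) x
  hBxx : ∀ x ∈ Icc (0:ℝ) ℓ, ∀ t ∈ Icc (0:ℝ) T, HasDerivAt (fun y => Bx y t) (Bxx x t) x
  cont_ux : ContinuousOn (fun p : ℝ × ℝ => ux p.1 p.2) (Icc 0 ℓ ×ˢ Icc 0 T)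
  cont_uxx : ContinuousOn (fun p : ℝ × ℝ => uxx p.1 p.2) (Icc 0 ℓ ×ˢ Icc 0 T)
  cont_ut : ContinuousOn (fun p : ℝ × ℝ => ut p.1 p.2) (Icc 0 ℓ ×ˢ Icc 0 T)
  cont_utt : ContinuousOn (fun p : ℝ × ℝ => utt p.1 p.2) (Icc 0 ℓ ×ˢ Icc 0 T)
  cont_uxt : ContinuousOn (fun p : ℝ × ℝ => uxt p.1 p.2) (Icc 0 ℓ ×ˢ Icc 0 T)
  cont_uxxt : ContinuousOn (fun p : ℝ × ℝ => uxxt p.1 p.2) (Icc 0 ℓ ×ˢ Icc 0 T)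
  cont_Ax : ContinuousOn (fun p : ℝ × ℝ => Ax p.1 p.2) (Icc 0 ℓ ×ˢ Icc 0 T)
  cont_Bx : ContinuousOn (fun p : ℝ × ℝ => Bx p.1 p.2) (Icc 0 ℓ ×ˢ Icc 0 T)
  cont_Bxx : ContinuousOn (fun p : ℝ × ℝ => Bxx p.1 p.2) (Icc 0 ℓ ×ˢ Icc 0 T)
  pde : ∀ x ∈ Ioo (0:ℝ) ℓ, ∀ t ∈ Ioo (0:ℝ) T,
    ρA x * utt x t + μ x * ut x t - Ax x t + Bxx x t = F x t
  init_u : ∀ x ∈ Ioo (0:ℝ) ℓ, u x 0 = 0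
  init_ut : ∀ x ∈ Ioo (0:ℝ) ℓ, ut x 0 = 0
  bc_u0 : ∀ t ∈ Icc (0:ℝ) T, u 0 t = 0
  bc_ul : ∀ t ∈ Icc (0:ℝ) T, u ℓ t = 0
  bc_m0 : ∀ t ∈ Icc (0:ℝ) T, r 0 * uxx 0 t + κ 0 * uxxt 0 t = 0
  bc_ml : ∀ t ∈ Icc (0:ℝ) T, r ℓ * uxx ℓ t + κ ℓ * uxxt ℓ t = 0

/-!
Multiplying the equation by `uₜ` and integrating by parts in `x` (all boundary terms vanish by
the simply supported conditions) gives the energy balance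
`E' + ∫ μ uₜ² + ∫ κ uₓₓₜ² = ∫ F uₜ` for the mechanical energy `E`. Since
`∫ F uₜ ≤ ‖F(t)‖² / 2 + E / ρ₀`, a Gronwall argument yields the Kelvin–Voigt bound
`2 κ₀ ∫∫ uₓₓₜ² ≤ exp (T / ρ₀) ‖F‖²`.
At each time, `uₓₜ(·, t)` has mean zero because `uₜ` vanishes at both ends, and a mean-zero `g`
on `[0, ℓ]` satisfies `ℓ g(0) = ∫ (x - ℓ) g'(x) dx` and `ℓ g(ℓ) = ∫ x g'(x) dx`; Cauchy–Schwarz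
then gives `g(0)², g(ℓ)² ≤ (ℓ / 3) ∫ g'²`.
The identities `∂ₓ uₜ = uₓₜ` and `∂ₓ uₓₜ = uₓₓₜ` are not among the data; they follow from the
continuity of the mixed partials, comparing time integrals of both sides with Fubini.
-/

open MeasureTheory intervalIntegral Filter Topology

section RealAnalysis

variable {a b c d : ℝ}

theorem integral_eq_sub_of_hasDerivAt_Icc {f f' : ℝ → ℝ} (hab : a ≤ b)
    (hf : ∀ x ∈ Icc a b, HasDerivAt f (f' x) x) (hf' : ContinuousOn f' (Icc a b)) :
    ∫ x in a..b, f' x = f b - f a :=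
  integral_eq_sub_of_hasDerivAt (uIcc_of_le hab ▸ hf) (hf'.intervalIntegrable_of_Icc hab)

theorem integral_deriv_mul_eq_sub_of_le {u u' v v' : ℝ → ℝ} (hab : a ≤ b)
    (hu : ContinuousOn u (Icc a b)) (hv : ContinuousOn v (Icc a b))
    (hu' : ContinuousOn u' (Icc a b)) (hv' : ContinuousOn v' (Icc a b))
    (huu' : ∀ x ∈ Ioo a b, HasDerivAt u (u' x) x) (hvv' : ∀ x ∈ Ioo a b, HasDerivAt v (v' x) x) :
    ∫ x in a..b, (u' x * v x + u x * v' x) = u b * v b - u a * v a :=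
  integral_deriv_mul_eq_sub_of_hasDerivAt (uIcc_of_le hab ▸ hu) (uIcc_of_le hab ▸ hv)
    (by rwa [min_eq_left hab, max_eq_right hab]) (by rwa [min_eq_left hab, max_eq_right hab])
    (hu'.intervalIntegrable_of_Icc hab) (hv'.intervalIntegrable_of_Icc hab)

theorem ContinuousOn.hasDerivAt_integral {f : ℝ → ℝ} (hf : ContinuousOn f (Icc a b)) {x : ℝ}
    (hx : x ∈ Ioo a b) : HasDerivAt (fun u => ∫ y in a..u, f y) (f x) x :=
  integral_hasDerivAt_right
    ((hf.mono (Icc_subset_Icc le_rfl hx.2.le)).intervalIntegrable_of_Icc hx.1.le)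
    ⟨Icc a b, Icc_mem_nhds hx.1 hx.2, hf.aestronglyMeasurable measurableSet_Icc⟩
    ((hf x (Ioo_subset_Icc_self hx)).continuousAt (Icc_mem_nhds hx.1 hx.2))

theorem HasDerivAt.eq_zero_of_eqOn_zero {f : ℝ → ℝ} {f' x : ℝ} {s : Set ℝ}
    (hf : HasDerivAt f f' x) (hs : IsOpen s) (hx : x ∈ s) (h0 : EqOn f 0 s) : f' = 0 :=
  hf.unique ((hasDerivAt_const x 0).congr_of_eventuallyEq (eventually_of_mem (hs.mem_nhds hx) h0))

theorem eqOn_of_forall_integral_eq {φ ψ : ℝ → ℝ} (hab : a < b)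
    (hφ : ContinuousOn φ (Icc a b)) (hψ : ContinuousOn ψ (Icc a b))
    (h : ∀ s ∈ Icc a b, ∫ t in a..s, φ t = ∫ t in a..s, ψ t) : EqOn φ ψ (Icc a b) := by
  refine EqOn.of_subset_closure (fun x hx => ?_) hφ hψ Ioo_subset_Icc_self (closure_Ioo hab.ne).ge
  have hprim : (fun s => ∫ t in a..s, φ t) =ᶠ[𝓝 x] fun s => ∫ t in a..s, ψ t :=
    eventually_of_mem (Icc_mem_nhds hx.1 hx.2) h
  exact (hφ.hasDerivAt_integral hx).unique
    ((hψ.hasDerivAt_integral hx).congr_of_eventuallyEq hprim)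

theorem continuousOn_parametric_intervalIntegral_of_continuousOn {f : ℝ → ℝ → ℝ} (hab : a ≤ b)
    (hf : ContinuousOn (fun p : ℝ × ℝ => f p.1 p.2) (Icc a b ×ˢ Icc c d)) :
    ContinuousOn (fun t => ∫ x in a..b, f x t) (Icc c d) := by
  obtain ⟨G, hG⟩ := ContinuousMap.exists_restrict_eq (Y := ℝ) (isClosed_Icc.prod isClosed_Icc)
    ⟨_, hf.domRestrict⟩
  have hcont : Continuous fun t => ∫ x in a..b, G (x, t) :=
    continuous_parametric_intervalIntegral_of_continuous' (f := fun t x => G (x, t))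
      (G.continuous.comp continuous_swap) a b
  refine hcont.continuousOn.congr fun t ht => integral_congr fun x hx => ?_
  exact (congrFun (congrArg ContinuousMap.toFun hG) ⟨(x, t), uIcc_of_le hab ▸ hx, ht⟩).symm

theorem integral_integral_swap_of_continuousOn {f : ℝ → ℝ → ℝ} (hab : a ≤ b) (hcd : c ≤ d)
    (hf : ContinuousOn (fun p : ℝ × ℝ => f p.1 p.2) (Icc a b ×ˢ Icc c d)) :
    ∫ x in a..b, ∫ t in c..d, f x t = ∫ t in c..d, ∫ x in a..b, f x t := by
  simp only [integral_of_le hab, integral_of_le hcd]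
  refine integral_integral_swap ?_
  rw [Measure.prod_restrict]
  exact (hf.integrableOn_compact (isCompact_Icc.prod isCompact_Icc)).mono_set
    (prod_mono Ioc_subset_Icc_self Ioc_subset_Icc_self)

theorem sub_eq_integral_of_mixed_partials {f fx ft fxt : ℝ → ℝ → ℝ} (hcd : c < d)
    (hfx : ∀ x ∈ Icc a b, ∀ t ∈ Icc c d, HasDerivAt (fun y => f y t) (fx x t) x)
    (hft : ∀ x ∈ Icc a b, ∀ t ∈ Icc c d, HasDerivAt (fun s => f x s) (ft x t) t)
    (hfxt : ∀ x ∈ Icc a b, ∀ t ∈ Icc c d, HasDerivAt (fun s => fx x s) (fxt x t) t)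
    (cfx : ContinuousOn (fun p : ℝ × ℝ => fx p.1 p.2) (Icc a b ×ˢ Icc c d))
    (cft : ContinuousOn (fun p : ℝ × ℝ => ft p.1 p.2) (Icc a b ×ˢ Icc c d))
    (cfxt : ContinuousOn (fun p : ℝ × ℝ => fxt p.1 p.2) (Icc a b ×ˢ Icc c d))
    {x : ℝ} (hx : x ∈ Icc a b) :
    EqOn (fun t => ft x t - ft a t) (fun t => ∫ y in a..x, fxt y t) (Icc c d) := by
  have ha : a ∈ Icc a b := left_mem_Icc.2 (hx.1.trans hx.2)
  have hax : Icc a x ⊆ Icc a b := Icc_subset_Icc le_rfl hx.2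
  refine eqOn_of_forall_integral_eq hcd ((cft.uncurry_left x hx).sub (cft.uncurry_left a ha))
    (continuousOn_parametric_intervalIntegral_of_continuousOn hx.1
      (cfxt.mono (prod_mono hax subset_rfl))) fun s hs => ?_
  have hcs : Icc c s ⊆ Icc c d := Icc_subset_Icc le_rfl hs.2
  calc ∫ t in c..s, (ft x t - ft a t)
      = (f x s - f a s) - (f x c - f a c) :=
        integral_eq_sub_of_hasDerivAt_Icc hs.1
          (fun t ht => (hft x hx t (hcs ht)).fun_sub (hft a ha t (hcs ht)))
          (((cft.uncurry_left x hx).sub (cft.uncurry_left a ha)).mono hcs)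
    _ = ∫ y in a..x, (fx y s - fx y c) := by
        rw [integral_eq_sub_of_hasDerivAt_Icc hx.1
          (fun y hy => (hfx y (hax hy) s hs).fun_sub (hfx y (hax hy) c (left_mem_Icc.2 hcd.le)))
          (((cfx.uncurry_right s hs).sub
            (cfx.uncurry_right c (left_mem_Icc.2 hcd.le))).mono hax)]
        ring
    _ = ∫ y in a..x, ∫ t in c..s, fxt y t :=
        integral_congr fun y hy => (integral_eq_sub_of_hasDerivAt_Icc hs.1
          (fun t ht => hfxt y (hax (uIcc_of_le hx.1 ▸ hy)) t (hcs ht))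
          ((cfxt.uncurry_left y (hax (uIcc_of_le hx.1 ▸ hy))).mono hcs)).symm
    _ = ∫ t in c..s, ∫ y in a..x, fxt y t :=
        integral_integral_swap_of_continuousOn hx.1 hs.1 (cfxt.mono (prod_mono hax hcs))

theorem hasDerivAt_of_mixed_partials {f fx ft fxt : ℝ → ℝ → ℝ} (hcd : c < d)
    (hfx : ∀ x ∈ Icc a b, ∀ t ∈ Icc c d, HasDerivAt (fun y => f y t) (fx x t) x)
    (hft : ∀ x ∈ Icc a b, ∀ t ∈ Icc c d, HasDerivAt (fun s => f x s) (ft x t) t)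
    (hfxt : ∀ x ∈ Icc a b, ∀ t ∈ Icc c d, HasDerivAt (fun s => fx x s) (fxt x t) t)
    (cfx : ContinuousOn (fun p : ℝ × ℝ => fx p.1 p.2) (Icc a b ×ˢ Icc c d))
    (cft : ContinuousOn (fun p : ℝ × ℝ => ft p.1 p.2) (Icc a b ×ˢ Icc c d))
    (cfxt : ContinuousOn (fun p : ℝ × ℝ => fxt p.1 p.2) (Icc a b ×ˢ Icc c d))
    {x t : ℝ} (hx : x ∈ Ioo a b) (ht : t ∈ Icc c d) :
    HasDerivAt (fun y => ft y t) (fxt x t) x := by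
  have hrepr : (fun y => ft a t + ∫ z in a..y, fxt z t) =ᶠ[𝓝 x] fun y => ft y t :=
    eventually_of_mem (Icc_mem_nhds hx.1 hx.2) fun y hy => by
      have := sub_eq_integral_of_mixed_partials hcd hfx hft hfxt cfx cft cfxt hy ht
      simp only at this
      linarith
  exact (((cfxt.uncurry_right t ht).hasDerivAt_integral hx).const_add _).congr_of_eventuallyEq
    hrepr.symm

theorem sq_integral_mul_le {f g : ℝ → ℝ} (hab : a ≤ b) (hf : ContinuousOn f (Icc a b))
    (hg : ContinuousOn g (Icc a b)) :
    (∫ x in a..b, f x * g x) ^ 2 ≤ (∫ x in a..b, f x ^ 2) * ∫ x in a..b, g x ^ 2 := by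
  have hquad : ∀ s : ℝ, 0 ≤ (∫ x in a..b, g x ^ 2) * (s * s)
      + 2 * (∫ x in a..b, f x * g x) * s + ∫ x in a..b, f x ^ 2 := by
    intro s
    have hexpand : ∫ x in a..b, (s * g x + f x) ^ 2 = ∫ x in a..b,
        (s * s * g x ^ 2 + 2 * s * (f x * g x) + f x ^ 2) :=
      integral_congr fun x _ => by ring
    rw [intervalIntegral.integral_add, intervalIntegral.integral_add,
      intervalIntegral.integral_const_mul, intervalIntegral.integral_const_mul] at hexpand
    · linarith [integral_nonneg (μ := volume) hab fun x _ => sq_nonneg (s * g x + f x)]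
    all_goals exact ContinuousOn.intervalIntegrable_of_Icc hab (by fun_prop)
  have := discrim_le_zero hquad
  rw [discrim] at this
  linarith

theorem integral_sub_mul_deriv_eq {g g' : ℝ → ℝ} (hab : a ≤ b) (hg : ContinuousOn g (Icc a b))
    (hg' : ContinuousOn g' (Icc a b)) (hderiv : ∀ x ∈ Ioo a b, HasDerivAt g (g' x) x) (c : ℝ) :
    ∫ x in a..b, (x - c) * g' x = (b - c) * g b - (a - c) * g a - ∫ x in a..b, g x := by
  have hibp := integral_mul_deriv_eq_deriv_mul_of_hasDerivAt (u := fun x => x - c)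
    (u' := fun _ => 1) (by fun_prop) (uIcc_of_le hab ▸ hg)
    (fun x _ => (hasDerivAt_id x).sub_const c)
    (by rwa [min_eq_left hab, max_eq_right hab]) intervalIntegrable_const
    (hg'.intervalIntegrable_of_Icc hab)
  simpa only [one_mul] using hibp

theorem sq_endpoint_le_of_integral_eq_zero {g g' : ℝ → ℝ} (hab : a < b)
    (hg : ContinuousOn g (Icc a b)) (hg' : ContinuousOn g' (Icc a b))
    (hderiv : ∀ x ∈ Ioo a b, HasDerivAt g (g' x) x) (hmean : ∫ x in a..b, g x = 0) :
    g a ^ 2 ≤ (b - a) / 3 * ∫ x in a..b, g' x ^ 2 ∧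
      g b ^ 2 ≤ (b - a) / 3 * ∫ x in a..b, g' x ^ 2 := by
  have hweighted : ∀ c, ((b - c) * g b - (a - c) * g a) ^ 2 ≤
      ((b - c) ^ 3 - (a - c) ^ 3) / 3 * ∫ x in a..b, g' x ^ 2 := by
    intro c
    have hcs := sq_integral_mul_le (f := fun x => x - c) hab.le (by fun_prop) hg'
    rw [integral_sub_mul_deriv_eq hab.le hg hg' hderiv, hmean, sub_zero,
      intervalIntegral.integral_comp_sub_right (fun x => x ^ 2), integral_pow] at hcs
    norm_num at hcs
    exact hcs
  have hpos : 0 < (b - a) ^ 2 := by nlinarith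
  constructor
  · refine le_of_mul_le_mul_left ?_ hpos
    calc (b - a) ^ 2 * g a ^ 2 = ((b - b) * g b - (a - b) * g a) ^ 2 := by ring
      _ ≤ _ := hweighted b
      _ = _ := by ring
  · refine le_of_mul_le_mul_left ?_ hpos
    calc (b - a) ^ 2 * g b ^ 2 = ((b - a) * g b - (a - a) * g a) ^ 2 := by ring
      _ ≤ _ := hweighted a
      _ = _ := by ring

theorem integral_add_mul_le_exp_mul_integral {E g : ℝ → ℝ} {K : ℝ} (hab : a ≤ b) (hK : 0 ≤ K)
    (hE : ContinuousOn E (Icc a b)) (hg : ContinuousOn g (Icc a b))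
    (hg0 : ∀ t ∈ Icc a b, 0 ≤ g t) (hle : ∀ τ ∈ Icc a b, E τ ≤ ∫ t in a..τ, (g t + K * E t)) :
    ∫ t in a..b, (g t + K * E t) ≤ Real.exp (K * (b - a)) * ∫ t in a..b, g t := by
  set Ψ : ℝ → ℝ := fun τ => ∫ t in a..τ, (g t + K * E t) with hΨ
  have hψ : ContinuousOn (fun t => g t + K * E t) (Icc a b) := by fun_prop
  have hprim : ∀ {h : ℝ → ℝ}, ContinuousOn h (Icc a b) →
      ContinuousOn (fun τ => ∫ t in a..τ, h t) (Icc a b) := fun hh =>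
    uIcc_of_le hab ▸ continuousOn_primitive_interval' (hh.intervalIntegrable_of_Icc hab)
      left_mem_uIcc
  -- `e^{-K (τ - a)}` is an integrating factor for `Ψ' = g + K E ≤ g + K Ψ`.
  set χ : ℝ → ℝ := fun τ => Real.exp (-(K * (τ - a))) * Ψ τ - ∫ t in a..τ, g t
  have hχ : AntitoneOn χ (Icc a b) := by
    refine antitoneOn_of_hasDerivWithinAt_nonpos (convex_Icc a b)
      ((by fun_prop : Continuous fun τ => Real.exp (-(K * (τ - a)))).continuousOn.mul
        (hprim hψ) |>.sub (hprim hg))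
      (f' := fun τ => (Real.exp (-(K * (τ - a))) - 1) * g τ
        + K * Real.exp (-(K * (τ - a))) * (E τ - Ψ τ)) (fun τ hτ => ?_) (fun τ hτ => ?_)
    all_goals rw [interior_Icc] at hτ
    · have hexp : HasDerivAt (fun τ => Real.exp (-(K * (τ - a))))
          (Real.exp (-(K * (τ - a))) * -(K * 1)) τ :=
        (((hasDerivAt_id τ).sub_const a).const_mul K).neg.exp
      exact ((hexp.mul (hψ.hasDerivAt_integral hτ)).sub
        (hg.hasDerivAt_integral hτ)).hasDerivWithinAt.congr_deriv (by ring)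
    · have h1 : Real.exp (-(K * (τ - a))) ≤ 1 :=
        Real.exp_le_one_iff.2 (neg_nonpos.2 (mul_nonneg hK (sub_nonneg.2 hτ.1.le)))
      have h2 := hg0 τ (Ioo_subset_Icc_self hτ)
      have h3 := hle τ (Ioo_subset_Icc_self hτ)
      have h4 := Real.exp_pos (-(K * (τ - a)))
      nlinarith [mul_nonneg hK h4.le]
  have hχb : Real.exp (-(K * (b - a))) * Ψ b ≤ ∫ t in a..b, g t := by
    have := hχ (left_mem_Icc.2 hab) (right_mem_Icc.2 hab) hab
    simp only [χ, hΨ, integral_same, mul_zero, sub_zero] at this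
    linarith
  calc Ψ b = Real.exp (K * (b - a)) * (Real.exp (-(K * (b - a))) * Ψ b) := by
        rw [← mul_assoc, ← Real.exp_add, add_neg_cancel, Real.exp_zero, one_mul]
    _ ≤ Real.exp (K * (b - a)) * ∫ t in a..b, g t :=
        mul_le_mul_of_nonneg_left hχb (Real.exp_pos _).le

end RealAnalysis

namespace ForwardSol

variable {ℓ T : ℝ} {ρA μ Tr r κ : ℝ → ℝ} {F : ℝ → ℝ → ℝ}
  (sol : ForwardSol ℓ T ρA μ Tr r κ F)

noncomputable def energyDensity (x t : ℝ) : ℝ :=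
  (ρA x * sol.ut x t ^ 2 + Tr x * sol.ux x t ^ 2 + r x * sol.uxx x t ^ 2) / 2

def powerDensity (x t : ℝ) : ℝ :=
  ρA x * sol.ut x t * sol.utt x t + Tr x * sol.ux x t * sol.uxt x t
    + r x * sol.uxx x t * sol.uxxt x t

noncomputable def energy (t : ℝ) : ℝ := ∫ x in (0:ℝ)..ℓ, sol.energyDensity x t

noncomputable def power (t : ℝ) : ℝ := ∫ x in (0:ℝ)..ℓ, sol.powerDensity x t

-- `κ₀ * dissipation t` bounds the Kelvin–Voigt dissipation `∫ κ uₓₓₜ²` from below.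
noncomputable def dissipation (t : ℝ) : ℝ := ∫ x in (0:ℝ)..ℓ, sol.uxxt x t ^ 2

theorem hasDerivAt_ut (hT : 0 < T) {x t : ℝ} (hx : x ∈ Ioo 0 ℓ) (ht : t ∈ Icc 0 T) :
    HasDerivAt (fun y => sol.ut y t) (sol.uxt x t) x :=
  hasDerivAt_of_mixed_partials hT sol.hux sol.hut sol.huxt sol.cont_ux sol.cont_ut
    sol.cont_uxt hx ht

theorem hasDerivAt_uxt (hT : 0 < T) {x t : ℝ} (hx : x ∈ Ioo 0 ℓ) (ht : t ∈ Icc 0 T) :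
    HasDerivAt (fun y => sol.uxt y t) (sol.uxxt x t) x :=
  hasDerivAt_of_mixed_partials hT sol.huxx sol.huxt sol.huxxt sol.cont_uxx sol.cont_uxt
    sol.cont_uxxt hx ht

theorem ut_boundary_eq_zero (hℓ : 0 ≤ ℓ) {t : ℝ} (ht : t ∈ Ioo 0 T) :
    sol.ut 0 t = 0 ∧ sol.ut ℓ t = 0 :=
  ⟨(sol.hut 0 (left_mem_Icc.2 hℓ) t (Ioo_subset_Icc_self ht)).eq_zero_of_eqOn_zero isOpen_Ioo ht
      fun s hs => sol.bc_u0 s (Ioo_subset_Icc_self hs),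
    (sol.hut ℓ (right_mem_Icc.2 hℓ) t (Ioo_subset_Icc_self ht)).eq_zero_of_eqOn_zero isOpen_Ioo ht
      fun s hs => sol.bc_ul s (Ioo_subset_Icc_self hs)⟩

theorem energyDensity_initial_eq_zero (hT : 0 ≤ T) {x : ℝ} (hx : x ∈ Ioo 0 ℓ) :
    sol.energyDensity x 0 = 0 := by
  have h0 : (0:ℝ) ∈ Icc 0 T := left_mem_Icc.2 hT
  have hux0 : ∀ y ∈ Ioo 0 ℓ, sol.ux y 0 = 0 := fun y hy =>
    (sol.hux y (Ioo_subset_Icc_self hy) 0 h0).eq_zero_of_eqOn_zero isOpen_Ioo hy sol.init_u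
  have huxx0 : sol.uxx x 0 = 0 :=
    (sol.huxx x (Ioo_subset_Icc_self hx) 0 h0).eq_zero_of_eqOn_zero isOpen_Ioo hx hux0
  simp [energyDensity, sol.init_ut x hx, hux0 x hx, huxx0]

theorem hasDerivAt_energyDensity {x t : ℝ} (hx : x ∈ Icc 0 ℓ) (ht : t ∈ Icc 0 T) :
    HasDerivAt (sol.energyDensity x) (sol.powerDensity x t) t := by
  refine (((((sol.hutt x hx t ht).fun_pow 2).const_mul (ρA x)).fun_add
    (((sol.huxt x hx t ht).fun_pow 2).const_mul (Tr x))).fun_add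
    (((sol.huxxt x hx t ht).fun_pow 2).const_mul (r x))).div_const 2 |>.congr_deriv ?_
  simp only [powerDensity]
  push_cast
  ring

theorem continuousOn_energyDensity (hρA : ContinuousOn ρA (Icc 0 ℓ))
    (hTr : ContinuousOn Tr (Icc 0 ℓ)) (hr : ContinuousOn r (Icc 0 ℓ)) :
    ContinuousOn (fun p : ℝ × ℝ => sol.energyDensity p.1 p.2) (Icc 0 ℓ ×ˢ Icc 0 T) := by
  have cut := sol.cont_ut
  have cux := sol.cont_ux
  have cuxx := sol.cont_uxx
  unfold energyDensity
  fun_prop (disch := first | exact mapsTo_fst_prod | norm_num)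

theorem continuousOn_powerDensity (hρA : ContinuousOn ρA (Icc 0 ℓ))
    (hTr : ContinuousOn Tr (Icc 0 ℓ)) (hr : ContinuousOn r (Icc 0 ℓ)) :
    ContinuousOn (fun p : ℝ × ℝ => sol.powerDensity p.1 p.2) (Icc 0 ℓ ×ˢ Icc 0 T) := by
  have cut := sol.cont_ut
  have cutt := sol.cont_utt
  have cux := sol.cont_ux
  have cuxt := sol.cont_uxt
  have cuxx := sol.cont_uxx
  have cuxxt := sol.cont_uxxt
  unfold powerDensity
  fun_prop (disch := exact mapsTo_fst_prod)

theorem energy_eq_integral_power (hℓ : 0 ≤ ℓ) (hρA : ContinuousOn ρA (Icc 0 ℓ))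
    (hTr : ContinuousOn Tr (Icc 0 ℓ)) (hr : ContinuousOn r (Icc 0 ℓ)) {τ : ℝ}
    (hτ : τ ∈ Icc 0 T) : sol.energy τ = ∫ t in (0:ℝ)..τ, sol.power t := by
  have hτT : Icc 0 τ ⊆ Icc 0 T := Icc_subset_Icc le_rfl hτ.2
  have hcont := (sol.continuousOn_powerDensity hρA hTr hr).mono (prod_mono subset_rfl hτT)
  unfold energy power
  rw [← integral_integral_swap_of_continuousOn hℓ hτ.1 hcont]
  refine integral_congr_Ioo_of_le hℓ fun x hx => ?_
  rw [integral_eq_sub_of_hasDerivAt_Icc hτ.1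
    (fun s hs => sol.hasDerivAt_energyDensity (Ioo_subset_Icc_self hx) (hτT hs))
    (hcont.uncurry_left x (Ioo_subset_Icc_self hx)),
    sol.energyDensity_initial_eq_zero (hτ.1.trans hτ.2) hx, sub_zero]

theorem integral_elasticForce_mul_ut_eq (hℓ : 0 ≤ ℓ) (hT : 0 < T)
    (hTr : ContinuousOn Tr (Icc 0 ℓ)) (hr : ContinuousOn r (Icc 0 ℓ))
    (hκ : ContinuousOn κ (Icc 0 ℓ)) {t : ℝ} (ht : t ∈ Ioo 0 T) :
    ∫ x in (0:ℝ)..ℓ, (sol.Bxx x t - sol.Ax x t) * sol.ut x t = ∫ x in (0:ℝ)..ℓ,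
      (Tr x * sol.ux x t * sol.uxt x t
        + (r x * sol.uxx x t + κ x * sol.uxxt x t) * sol.uxxt x t) := by
  have htI := Ioo_subset_Icc_self ht
  have cut := sol.cont_ut.uncurry_right t htI
  have cux := sol.cont_ux.uncurry_right t htI
  have cuxt := sol.cont_uxt.uncurry_right t htI
  have cuxx := sol.cont_uxx.uncurry_right t htI
  have cuxxt := sol.cont_uxxt.uncurry_right t htI
  have cAx := sol.cont_Ax.uncurry_right t htI
  have cBx := sol.cont_Bx.uncurry_right t htI
  have cBxx := sol.cont_Bxx.uncurry_right t htI
  obtain ⟨hut0, hutℓ⟩ := sol.ut_boundary_eq_zero hℓ ht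
  have ibp_tension : ∫ x in (0:ℝ)..ℓ,
      (sol.Ax x t * sol.ut x t + Tr x * sol.ux x t * sol.uxt x t) = 0 := by
    rw [integral_deriv_mul_eq_sub_of_le hℓ (by fun_prop) cut cAx cuxt
      (fun x hx => sol.hAx x (Ioo_subset_Icc_self hx) t htI)
      (fun x hx => sol.hasDerivAt_ut hT hx htI),
      hut0, hutℓ, mul_zero, mul_zero, sub_zero]
  have ibp_shear : ∫ x in (0:ℝ)..ℓ,
      (sol.Bxx x t * sol.ut x t + sol.Bx x t * sol.uxt x t) = 0 := by
    rw [integral_deriv_mul_eq_sub_of_le hℓ cBx cut cBxx cuxt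
      (fun x hx => sol.hBxx x (Ioo_subset_Icc_self hx) t htI)
      (fun x hx => sol.hasDerivAt_ut hT hx htI),
      hut0, hutℓ, mul_zero, mul_zero, sub_zero]
  have ibp_moment : ∫ x in (0:ℝ)..ℓ, (sol.Bx x t * sol.uxt x t
      + (r x * sol.uxx x t + κ x * sol.uxxt x t) * sol.uxxt x t) = 0 := by
    rw [integral_deriv_mul_eq_sub_of_le hℓ (by fun_prop) cuxt cBx cuxxt
      (fun x hx => sol.hBx x (Ioo_subset_Icc_self hx) t htI)
      (fun x hx => sol.hasDerivAt_uxt hT hx htI),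
      sol.bc_m0 t htI, sol.bc_ml t htI, zero_mul, zero_mul, sub_zero]
  calc ∫ x in (0:ℝ)..ℓ, (sol.Bxx x t - sol.Ax x t) * sol.ut x t
      = ∫ x in (0:ℝ)..ℓ,
        ((sol.Bxx x t * sol.ut x t + sol.Bx x t * sol.uxt x t)
          - (sol.Ax x t * sol.ut x t + Tr x * sol.ux x t * sol.uxt x t)
          - (sol.Bx x t * sol.uxt x t
            + (r x * sol.uxx x t + κ x * sol.uxxt x t) * sol.uxxt x t)
          + (Tr x * sol.ux x t * sol.uxt x t
            + (r x * sol.uxx x t + κ x * sol.uxxt x t) * sol.uxxt x t)) :=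
        integral_congr fun x _ => by ring
    _ = _ := by
        rw [intervalIntegral.integral_add, intervalIntegral.integral_sub,
          intervalIntegral.integral_sub, ibp_tension, ibp_shear, ibp_moment]
        · ring
        all_goals exact ContinuousOn.intervalIntegrable_of_Icc hℓ (by fun_prop)

theorem power_eq (hℓ : 0 ≤ ℓ) (hT : 0 < T) (hμ : ContinuousOn μ (Icc 0 ℓ))
    (hTr : ContinuousOn Tr (Icc 0 ℓ)) (hr : ContinuousOn r (Icc 0 ℓ))
    (hκ : ContinuousOn κ (Icc 0 ℓ))
    (hF : ContinuousOn (fun p : ℝ × ℝ => F p.1 p.2) (Icc 0 ℓ ×ˢ Icc 0 T))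
    {t : ℝ} (ht : t ∈ Ioo 0 T) :
    sol.power t = ∫ x in (0:ℝ)..ℓ,
      (F x t * sol.ut x t - μ x * sol.ut x t ^ 2 - κ x * sol.uxxt x t ^ 2) := by
  have htI := Ioo_subset_Icc_self ht
  have cut := sol.cont_ut.uncurry_right t htI
  have cux := sol.cont_ux.uncurry_right t htI
  have cuxt := sol.cont_uxt.uncurry_right t htI
  have cuxx := sol.cont_uxx.uncurry_right t htI
  have cuxxt := sol.cont_uxxt.uncurry_right t htI
  have cAx := sol.cont_Ax.uncurry_right t htI
  have cBxx := sol.cont_Bxx.uncurry_right t htI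
  have cF := hF.uncurry_right t htI
  calc sol.power t = ∫ x in (0:ℝ)..ℓ,
        ((F x t * sol.ut x t - μ x * sol.ut x t ^ 2 - κ x * sol.uxxt x t ^ 2)
          - (sol.Bxx x t - sol.Ax x t) * sol.ut x t
          + (Tr x * sol.ux x t * sol.uxt x t
            + (r x * sol.uxx x t + κ x * sol.uxxt x t) * sol.uxxt x t)) :=
        integral_congr_Ioo_of_le hℓ fun x hx => by
          simp only [powerDensity]
          linear_combination sol.ut x t * sol.pde x hx t ht
    _ = ∫ x in (0:ℝ)..ℓ,
        (F x t * sol.ut x t - μ x * sol.ut x t ^ 2 - κ x * sol.uxxt x t ^ 2) := by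
        rw [intervalIntegral.integral_add, intervalIntegral.integral_sub,
          sol.integral_elasticForce_mul_ut_eq hℓ hT hTr hr hκ ht, sub_add_cancel]
        all_goals exact ContinuousOn.intervalIntegrable_of_Icc hℓ (by fun_prop)

theorem power_le (hℓ : 0 ≤ ℓ) (hT : 0 < T) {ρ₀ κ₀ : ℝ} (hρ₀ : 0 < ρ₀)
    (hρA : ContinuousOn ρA (Icc 0 ℓ)) (hμ : ContinuousOn μ (Icc 0 ℓ))
    (hTr : ContinuousOn Tr (Icc 0 ℓ)) (hr : ContinuousOn r (Icc 0 ℓ))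
    (hκ : ContinuousOn κ (Icc 0 ℓ))
    (hF : ContinuousOn (fun p : ℝ × ℝ => F p.1 p.2) (Icc 0 ℓ ×ˢ Icc 0 T))
    (hρAb : ∀ x ∈ Icc 0 ℓ, ρ₀ ≤ ρA x) (hμb : ∀ x ∈ Icc 0 ℓ, 0 ≤ μ x)
    (hTrb : ∀ x ∈ Icc 0 ℓ, 0 ≤ Tr x) (hrb : ∀ x ∈ Icc 0 ℓ, 0 ≤ r x)
    (hκb : ∀ x ∈ Icc 0 ℓ, κ₀ ≤ κ x) {t : ℝ} (ht : t ∈ Ioo 0 T) :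
    sol.power t ≤ (∫ x in (0:ℝ)..ℓ, F x t ^ 2) / 2 + ρ₀⁻¹ * sol.energy t
      - κ₀ * sol.dissipation t := by
  have htI := Ioo_subset_Icc_self ht
  have cut := sol.cont_ut.uncurry_right t htI
  have cuxxt := sol.cont_uxxt.uncurry_right t htI
  have cF := hF.uncurry_right t htI
  have cE := (sol.continuousOn_energyDensity hρA hTr hr).uncurry_right
    (f := sol.energyDensity) t htI
  have hint : ∀ {h : ℝ → ℝ}, ContinuousOn h (Icc 0 ℓ) → IntervalIntegrable h volume 0 ℓ :=
    fun hh => hh.intervalIntegrable_of_Icc hℓ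
  have hpointwise : ∀ x ∈ Icc 0 ℓ,
      F x t * sol.ut x t - μ x * sol.ut x t ^ 2 - κ x * sol.uxxt x t ^ 2 ≤
        F x t ^ 2 / 2 + ρ₀⁻¹ * sol.energyDensity x t - κ₀ * sol.uxxt x t ^ 2 := by
    intro x hx
    have hkin : sol.ut x t ^ 2 / 2 ≤ ρ₀⁻¹ * sol.energyDensity x t := by
      rw [← div_eq_inv_mul, le_div_iff₀ hρ₀, energyDensity]
      nlinarith [mul_le_mul_of_nonneg_right (hρAb x hx) (sq_nonneg (sol.ut x t)),
        mul_nonneg (hTrb x hx) (sq_nonneg (sol.ux x t)),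
        mul_nonneg (hrb x hx) (sq_nonneg (sol.uxx x t))]
    nlinarith [sq_nonneg (F x t - sol.ut x t), mul_nonneg (hμb x hx) (sq_nonneg (sol.ut x t)),
      mul_le_mul_of_nonneg_right (hκb x hx) (sq_nonneg (sol.uxxt x t))]
  calc sol.power t = ∫ x in (0:ℝ)..ℓ,
        (F x t * sol.ut x t - μ x * sol.ut x t ^ 2 - κ x * sol.uxxt x t ^ 2) :=
        sol.power_eq hℓ hT hμ hTr hr hκ hF ht
    _ ≤ ∫ x in (0:ℝ)..ℓ,
        (F x t ^ 2 / 2 + ρ₀⁻¹ * sol.energyDensity x t - κ₀ * sol.uxxt x t ^ 2) :=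
        integral_mono_on hℓ (hint (by fun_prop)) (hint (by fun_prop)) hpointwise
    _ = _ := by
        rw [intervalIntegral.integral_sub, intervalIntegral.integral_add,
          intervalIntegral.integral_div, intervalIntegral.integral_const_mul,
          intervalIntegral.integral_const_mul]
        · rfl
        all_goals exact hint (by fun_prop)

theorem continuousOn_dissipation (hℓ : 0 ≤ ℓ) : ContinuousOn sol.dissipation (Icc 0 T) :=
  continuousOn_parametric_intervalIntegral_of_continuousOn hℓ (sol.cont_uxxt.pow 2)

theorem two_mul_integral_dissipation_le (hℓ : 0 ≤ ℓ) (hT : 0 < T) {ρ₀ κ₀ : ℝ} (hρ₀ : 0 < ρ₀)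
    (hκ₀ : 0 ≤ κ₀)
    (hρA : ContinuousOn ρA (Icc 0 ℓ)) (hμ : ContinuousOn μ (Icc 0 ℓ))
    (hTr : ContinuousOn Tr (Icc 0 ℓ)) (hr : ContinuousOn r (Icc 0 ℓ))
    (hκ : ContinuousOn κ (Icc 0 ℓ))
    (hF : ContinuousOn (fun p : ℝ × ℝ => F p.1 p.2) (Icc 0 ℓ ×ˢ Icc 0 T))
    (hρAb : ∀ x ∈ Icc 0 ℓ, ρ₀ ≤ ρA x) (hμb : ∀ x ∈ Icc 0 ℓ, 0 ≤ μ x)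
    (hTrb : ∀ x ∈ Icc 0 ℓ, 0 ≤ Tr x) (hrb : ∀ x ∈ Icc 0 ℓ, 0 ≤ r x)
    (hκb : ∀ x ∈ Icc 0 ℓ, κ₀ ≤ κ x) :
    2 * κ₀ * ∫ t in (0:ℝ)..T, sol.dissipation t
      ≤ Real.exp (T / ρ₀) * ∫ t in (0:ℝ)..T, ∫ x in (0:ℝ)..ℓ, F x t ^ 2 := by
  set G : ℝ → ℝ := fun t => ∫ x in (0:ℝ)..ℓ, F x t ^ 2
  have cG : ContinuousOn G (Icc 0 T) :=
    continuousOn_parametric_intervalIntegral_of_continuousOn hℓ (hF.pow 2)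
  have cE : ContinuousOn sol.energy (Icc 0 T) :=
    continuousOn_parametric_intervalIntegral_of_continuousOn hℓ
      (sol.continuousOn_energyDensity hρA hTr hr)
  have cP : ContinuousOn sol.power (Icc 0 T) :=
    continuousOn_parametric_intervalIntegral_of_continuousOn hℓ
      (sol.continuousOn_powerDensity hρA hTr hr)
  have cW := sol.continuousOn_dissipation hℓ
  have hint : ∀ {h : ℝ → ℝ}, ContinuousOn h (Icc 0 T) → ∀ τ ∈ Icc (0:ℝ) T,
      IntervalIntegrable h volume 0 τ :=
    fun hh τ hτ => (hh.mono (Icc_subset_Icc le_rfl hτ.2)).intervalIntegrable_of_Icc hτ.1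
  have hbalance : ∀ τ ∈ Icc 0 T, sol.energy τ + κ₀ * ∫ t in (0:ℝ)..τ, sol.dissipation t
      ≤ ∫ t in (0:ℝ)..τ, (G t / 2 + ρ₀⁻¹ * sol.energy t) := by
    intro τ hτ
    rw [sol.energy_eq_integral_power hℓ hρA hTr hr hτ, ← intervalIntegral.integral_const_mul,
      ← intervalIntegral.integral_add (hint cP τ hτ) ((hint cW τ hτ).const_mul κ₀)]
    refine integral_mono_on_of_le_Ioo hτ.1 (hint (by fun_prop) τ hτ) (hint (by fun_prop) τ hτ)
      fun t ht => ?_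
    have := sol.power_le hℓ hT hρ₀ hρA hμ hTr hr hκ hF hρAb hμb hTrb hrb hκb
      ⟨ht.1, ht.2.trans_le hτ.2⟩
    linarith
  have hdiss0 : ∀ τ ∈ Icc (0:ℝ) T, 0 ≤ ∫ t in (0:ℝ)..τ, sol.dissipation t := fun τ hτ =>
    integral_nonneg hτ.1 fun t _ => integral_nonneg hℓ fun x _ => sq_nonneg _
  have henergy0 : 0 ≤ sol.energy T := integral_nonneg hℓ fun x hx => by
    have := mul_nonneg (hρ₀.le.trans (hρAb x hx)) (sq_nonneg (sol.ut x T))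
    have := mul_nonneg (hTrb x hx) (sq_nonneg (sol.ux x T))
    have := mul_nonneg (hrb x hx) (sq_nonneg (sol.uxx x T))
    simp only [energyDensity]
    positivity
  have hgronwall := integral_add_mul_le_exp_mul_integral hT.le (inv_nonneg.2 hρ₀.le) cE
    (cG.div_const 2) (fun t _ => div_nonneg (integral_nonneg hℓ fun x _ => sq_nonneg _) zero_le_two)
    fun τ hτ => (le_add_of_nonneg_right (mul_nonneg hκ₀ (hdiss0 τ hτ))).trans (hbalance τ hτ)
  rw [intervalIntegral.integral_div, sub_zero, inv_mul_eq_div] at hgronwall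
  have := hbalance T (right_mem_Icc.2 hT.le)
  nlinarith [Real.exp_pos (T / ρ₀)]

theorem uxt_boundary_sq_le (hℓ : 0 < ℓ) (hT : 0 < T) {t : ℝ} (ht : t ∈ Ioo 0 T) :
    sol.uxt 0 t ^ 2 ≤ ℓ / 3 * sol.dissipation t ∧
      sol.uxt ℓ t ^ 2 ≤ ℓ / 3 * sol.dissipation t := by
  have htI := Ioo_subset_Icc_self ht
  obtain ⟨hut0, hutℓ⟩ := sol.ut_boundary_eq_zero hℓ.le ht
  have hmean : ∫ x in (0:ℝ)..ℓ, sol.uxt x t = 0 := by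
    rw [integral_eq_sub_of_hasDerivAt_of_le hℓ.le (sol.cont_ut.uncurry_right t htI)
      (fun x hx => sol.hasDerivAt_ut hT hx htI)
      ((sol.cont_uxt.uncurry_right t htI).intervalIntegrable_of_Icc hℓ.le), hut0, hutℓ, sub_zero]
  simpa only [sub_zero, dissipation] using sq_endpoint_le_of_integral_eq_zero hℓ
    (sol.cont_uxt.uncurry_right t htI) (sol.cont_uxxt.uncurry_right t htI)
    (fun x hx => sol.hasDerivAt_uxt hT hx htI) hmean

theorem integral_sq_le_of_sq_le_dissipation (hℓ : 0 ≤ ℓ) (hT : 0 ≤ T) {v : ℝ → ℝ}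
    (hv : ContinuousOn v (Icc 0 T)) (h : ∀ t ∈ Ioo 0 T, v t ^ 2 ≤ ℓ / 3 * sol.dissipation t) :
    ∫ t in (0:ℝ)..T, v t ^ 2 ≤ ℓ / 3 * ∫ t in (0:ℝ)..T, sol.dissipation t := by
  rw [← intervalIntegral.integral_const_mul]
  exact integral_mono_on_of_le_Ioo hT ((hv.pow 2).intervalIntegrable_of_Icc hT)
    (((sol.continuousOn_dissipation hℓ).intervalIntegrable_of_Icc hT).const_mul _) h

end ForwardSol

/-- **Boundary slope-velocity trace estimates of Corollary 1.** -/
theorem boundary_slope_velocity_trace_estimate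
    (ℓ T ρ₀ r₀ κ₀ : ℝ) (hℓ : 0 < ℓ) (hT : 0 < T)
    (hρ₀ : 0 < ρ₀) (hr₀ : 0 < r₀) (hκ₀ : 0 < κ₀)
    (ρA μ Tr r κ : ℝ → ℝ) (F : ℝ → ℝ → ℝ)
    (hρA : ContDiffOn ℝ (⊤ : ℕ∞) ρA (Icc 0 ℓ))
    (hμ : ContDiffOn ℝ (⊤ : ℕ∞) μ (Icc 0 ℓ))
    (hTr : ContDiffOn ℝ (⊤ : ℕ∞) Tr (Icc 0 ℓ))
    (hr : ContDiffOn ℝ (⊤ : ℕ∞) r (Icc 0 ℓ))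
    (hκ : ContDiffOn ℝ (⊤ : ℕ∞) κ (Icc 0 ℓ))
    (hρAb : ∀ x ∈ Icc (0:ℝ) ℓ, ρ₀ ≤ ρA x)
    (hμb : ∀ x ∈ Icc (0:ℝ) ℓ, 0 ≤ μ x)
    (hTrb : ∀ x ∈ Icc (0:ℝ) ℓ, 0 ≤ Tr x)
    (hrb : ∀ x ∈ Icc (0:ℝ) ℓ, r₀ ≤ r x)
    (hκb : ∀ x ∈ Icc (0:ℝ) ℓ, κ₀ ≤ κ x)
    (hF : ContinuousOn (fun p : ℝ × ℝ => F p.1 p.2) (Icc 0 ℓ ×ˢ Icc 0 T))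
    (sol : ForwardSol ℓ T ρA μ Tr r κ F) :
    (∫ t in (0:ℝ)..T, (sol.uxt 0 t) ^ 2)
      ≤ (5 * ℓ / (6 * κ₀)) * Real.exp (T / ρ₀) * (∫ t in (0:ℝ)..T, ∫ x in (0:ℝ)..ℓ, (F x t) ^ 2) ∧
    (∫ t in (0:ℝ)..T, (sol.uxt ℓ t) ^ 2)
      ≤ (5 * ℓ / (6 * κ₀)) * Real.exp (T / ρ₀) * (∫ t in (0:ℝ)..T, ∫ x in (0:ℝ)..ℓ, (F x t) ^ 2) := by
  have hD := sol.two_mul_integral_dissipation_le hℓ.le hT hρ₀ hκ₀.le hρA.continuousOn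
    hμ.continuousOn hTr.continuousOn hr.continuousOn hκ.continuousOn hF hρAb hμb hTrb
    (fun x hx => hr₀.le.trans (hrb x hx)) hκb
  set NF := ∫ t in (0:ℝ)..T, ∫ x in (0:ℝ)..ℓ, (F x t) ^ 2
  have hNF : 0 ≤ NF := integral_nonneg hT.le fun t _ => integral_nonneg hℓ.le fun x _ => sq_nonneg _
  have hconst : ℓ / 3 * ∫ t in (0:ℝ)..T, sol.dissipation t
      ≤ (5 * ℓ / (6 * κ₀)) * Real.exp (T / ρ₀) * NF := by
    rw [show 5 * ℓ / (6 * κ₀) * Real.exp (T / ρ₀) * NF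
        = ℓ * (5 * (Real.exp (T / ρ₀) * NF)) / (6 * κ₀) by ring, le_div_iff₀ (by positivity)]
    nlinarith [mul_le_mul_of_nonneg_left hD hℓ.le,
      mul_nonneg hℓ.le (mul_nonneg (Real.exp_pos (T / ρ₀)).le hNF)]
  exact ⟨(sol.integral_sq_le_of_sq_le_dissipation hℓ.le hT.le
      (sol.cont_uxt.uncurry_left 0 (left_mem_Icc.2 hℓ.le))
      fun t ht => (sol.uxt_boundary_sq_le hℓ hT ht).1).trans hconst,
    (sol.integral_sq_le_of_sq_le_dissipation hℓ.le hT.le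
      (sol.cont_uxt.uncurry_left ℓ (right_mem_Icc.2 hℓ.le))
      fun t ht => (sol.uxt_boundary_sq_le hℓ hT ht).2).trans hconst⟩
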